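/- Let M be a unital countably degree-1 saturated C*-algebra and π : Γ → M a uniformly bounded representation of a countable amenable (discrete) group Γ, i.e., each π(s) is invertible, π(st) = π(s)π(t), and ‖π‖ := sup_s ‖π(s)‖ < ∞. Then π is unitarizable: there exists an invertible v ∈ M with ‖v‖·‖v⁻¹‖ ≤ ‖π‖² such that v π(s) v⁻¹ is unitary for all s ∈ Γ. -/

import Mathlib

open Filter Finset

/-- A degree-1 *-polynomial in countably many variables with coefficients in `M`:
a finite linear combination of terms `a * x_i * b`, `a * x_i* * b` and constants. -/
def IsDeg1StarPoly {M : Type*} [CStarAlgebra M] (f : (ℕ → M) → M) : Prop :=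
  ∃ (c : M) (N : ℕ) (a b a' b' : Fin N → M) (idx idx' : Fin N → ℕ),
    ∀ x : ℕ → M,
      f x = c + (∑ i, a i * x (idx i) * b i) + (∑ i, a' i * star (x (idx' i)) * b' i)

/-- `M` is countably degree-1 saturated if every countable type of conditions
`‖P_n(x̄)‖ ∈ K_n` (with `P_n` degree-1 *-polynomials and `K_n ⊆ ℝ` compact) which is
approximately finitely realized in the unit ball of `M` is realized in `M`. -/
def CountablyDegree1Saturated (M : Type*) [CStarAlgebra M] : Prop :=
  ∀ P : ℕ → (ℕ → M) → M, (∀ n, IsDeg1StarPoly (P n)) →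
  ∀ K : ℕ → Set ℝ, (∀ n, IsCompact (K n)) →
    (∀ N : ℕ, 1 ≤ N → ∃ b : ℕ → M, (∀ m, ‖b m‖ ≤ 1) ∧
      ∀ n ≤ N, Metric.infDist ‖P n b‖ (K n) ≤ 1 / N) →
    ∃ b : ℕ → M, (∀ m, ‖b m‖ ≤ 1) ∧ ∀ n, ‖P n b‖ ∈ K n

/-!
Averaging the positive invertible elements `π(t)* π(t)` over Følner sets gives self-adjoint
elements with spectrum in `[C⁻², C²]` that are almost invariant under `h ↦ π(s)* h π(s)`;
these conditions are degree-1, so saturation yields an exactly invariant such `h`. Writing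
`h = v* v` with `v = √h` (so `‖v‖, ‖v⁻¹‖ ≤ C`), invariance says exactly that
`v π(s) v⁻¹` is unitary.
-/

open scoped symmDiff

section SpectralBounds

variable {A : Type*} [CStarAlgebra A]

lemma spectrum_subset_Icc_of_norm_sub_algebraMap_le [Nontrivial A] {a : A} {c r : ℝ}
    (h : ‖a - algebraMap ℝ A c‖ ≤ r) : spectrum ℝ a ⊆ Set.Icc (c - r) (c + r) := by
  intro x hx
  have hmem : x - c ∈ spectrum ℝ (a - algebraMap ℝ A c) := by
    rw [← spectrum.sub_singleton_eq]
    exact Set.sub_mem_sub hx rfl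
  have := (spectrum.norm_le_norm_of_mem hmem).trans h
  rw [Real.norm_eq_abs, abs_le] at this
  constructor <;> linarith

lemma IsSelfAdjoint.norm_sub_algebraMap_midpoint_le {a : A} (ha : IsSelfAdjoint a) {l u : ℝ}
    (hlu : l ≤ u) (h : spectrum ℝ a ⊆ Set.Icc l u) :
    ‖a - algebraMap ℝ A ((l + u) / 2)‖ ≤ (u - l) / 2 := by
  rw [← cfc_id' ℝ a, ← cfc_const ((l + u) / 2) a, ← cfc_sub _ _ a]
  refine norm_cfc_le (by linarith) fun x hx => ?_
  obtain ⟨h₁, h₂⟩ := h hx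
  rw [Real.norm_eq_abs, abs_le]
  constructor <;> linarith

lemma spectrum_star_mul_self_subset_Icc [Nontrivial A] (a : Aˣ) :
    spectrum ℝ (star (a : A) * a) ⊆ Set.Icc (‖(↑a⁻¹ : A)‖ ^ 2)⁻¹ (‖(a : A)‖ ^ 2) := by
  intro x hx
  have hunit : ((star a * a : Aˣ) : A) = star (a : A) * a := by simp [Units.coe_star]
  have hx₀ : 0 < x := by
    refine (spectrum_star_mul_self_nonneg _ hx).lt_of_ne' ?_
    rintro rfl
    exact spectrum.zero_notMem ℝ (star a * a).isUnit (hunit ▸ hx)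
  have hx_inv : x⁻¹ ∈ spectrum ℝ (↑(star a * a)⁻¹ : A) :=
    spectrum.inv₀_mem_iff.mp (by rwa [inv_inv, hunit])
  have hinv : (↑(star a * a)⁻¹ : A) = ↑a⁻¹ * star (↑a⁻¹ : A) := by
    simp [mul_inv_rev, Units.coe_star_inv]
  constructor
  · refine inv_le_of_inv_le₀ hx₀ ?_
    calc x⁻¹ ≤ ‖(↑(star a * a)⁻¹ : A)‖ :=
          (le_abs_self _).trans (spectrum.norm_le_norm_of_mem hx_inv)
      _ = ‖(↑a⁻¹ : A)‖ ^ 2 := by rw [hinv, CStarRing.norm_self_mul_star, sq]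
  · calc x ≤ ‖star (a : A) * a‖ := (le_abs_self _).trans (spectrum.norm_le_norm_of_mem hx)
      _ = ‖(a : A)‖ ^ 2 := by rw [CStarRing.norm_star_mul_self, sq]

lemma IsSelfAdjoint.exists_unit_star_mul_self_eq {h : A} (hh : IsSelfAdjoint h) {l u : ℝ}
    (hl : 0 < l) (hspec : spectrum ℝ h ⊆ Set.Icc l u) :
    ∃ v : Aˣ, star (v : A) * v = h ∧ ‖(v : A)‖ ≤ √u ∧ ‖(↑v⁻¹ : A)‖ ≤ (√l)⁻¹ := by
  have hsqrt_pos : ∀ x ∈ spectrum ℝ h, 0 < √x := fun x hx =>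
    Real.sqrt_pos.2 (hl.trans_le (hspec hx).1)
  refine ⟨cfcUnits Real.sqrt h (fun x hx => (hsqrt_pos x hx).ne') (ha := hh), ?_, ?_, ?_⟩
  · change star (cfc Real.sqrt h) * cfc Real.sqrt h = h
    rw [(cfc_predicate Real.sqrt h).star_eq, ← cfc_mul ..,
      cfc_congr fun x hx => Real.mul_self_sqrt (hl.trans_le (hspec hx).1).le, cfc_id' ℝ h]
  · refine norm_cfc_le (Real.sqrt_nonneg u) fun x hx => ?_
    rw [Real.norm_of_nonneg (Real.sqrt_nonneg x)]
    exact Real.sqrt_le_sqrt (hspec hx).2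
  · change ‖cfc (fun x => (√x)⁻¹) h‖ ≤ _
    refine norm_cfc_le (inv_nonneg.2 (Real.sqrt_nonneg l)) fun x hx => ?_
    rw [Real.norm_of_nonneg (inv_nonneg.2 (Real.sqrt_nonneg x))]
    exact inv_anti₀ (Real.sqrt_pos.2 hl) (Real.sqrt_le_sqrt (hspec hx).1)

lemma Units.norm_star_mul_self_sub_algebraMap_le [Nontrivial A] (a : Aˣ) {C : ℝ}
    (ha : ‖(a : A)‖ ≤ C) (ha' : ‖(↑a⁻¹ : A)‖ ≤ C) :
    ‖star (a : A) * a - algebraMap ℝ A (((C ^ 2)⁻¹ + C ^ 2) / 2)‖ ≤ (C ^ 2 - (C ^ 2)⁻¹) / 2 := by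
  have hinv_pos : 0 < ‖(↑a⁻¹ : A)‖ ^ 2 := by positivity [norm_pos_iff.2 a⁻¹.ne_zero]
  have hlower : (C ^ 2)⁻¹ ≤ (‖(↑a⁻¹ : A)‖ ^ 2)⁻¹ :=
    inv_anti₀ hinv_pos (pow_le_pow_left₀ (norm_nonneg _) ha' 2)
  have hupper : ‖(a : A)‖ ^ 2 ≤ C ^ 2 := pow_le_pow_left₀ (norm_nonneg _) ha 2
  have hC : 1 ≤ C ^ 2 := by
    calc (1 : ℝ) = ‖((a * a⁻¹ : Aˣ) : A)‖ := by simp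
      _ ≤ C * C :=
        (norm_mul_le _ _).trans (mul_le_mul ha ha' (norm_nonneg _) ((norm_nonneg _).trans ha))
      _ = C ^ 2 := (sq C).symm
  exact (IsSelfAdjoint.star_mul_self _).norm_sub_algebraMap_midpoint_le
    ((inv_le_one_of_one_le₀ hC).trans hC)
    ((spectrum_star_mul_self_subset_Icc a).trans (Set.Icc_subset_Icc hlower hupper))

end SpectralBounds

lemma Units.conj_mem_unitary {R : Type*} [Monoid R] [StarMul R] (v u : Rˣ)
    (hu : star (u : R) * (star (v : R) * v) * u = star (v : R) * v) :
    (v : R) * u * ↑v⁻¹ ∈ unitary R := by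
  refine (v * u * v⁻¹).isUnit.mem_unitary_of_star_mul_self ?_
  calc star ((v : R) * u * ↑v⁻¹) * (v * u * ↑v⁻¹)
      = star (↑v⁻¹ : R) * (star (u : R) * (star (v : R) * v) * u) * ↑v⁻¹ := by
        simp only [star_mul, mul_assoc]
    _ = 1 := by
        rw [hu, ← mul_assoc, ← star_mul, Units.mul_inv, star_one, one_mul, Units.mul_inv]

lemma norm_sum_sub_sum_le_card_symmDiff_mul {ι E : Type*} [DecidableEq ι]
    [SeminormedAddCommGroup E] (s t : Finset ι) {f : ι → E} {c : ℝ} (hf : ∀ i, ‖f i‖ ≤ c) :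
    ‖∑ i ∈ s, f i - ∑ i ∈ t, f i‖ ≤ #(s ∆ t) * c := by
  rw [← Finset.sum_sdiff_sub_sum_sdiff]
  calc ‖∑ i ∈ s \ t, f i - ∑ i ∈ t \ s, f i‖
      ≤ ∑ i ∈ s \ t, ‖f i‖ + ∑ i ∈ t \ s, ‖f i‖ :=
        (norm_sub_le _ _).trans (add_le_add (norm_sum_le _ _) (norm_sum_le _ _))
    _ = ∑ i ∈ s ∆ t, ‖f i‖ := (Finset.sum_union disjoint_sdiff_sdiff).symm
    _ ≤ #(s ∆ t) * c := by
        simpa using Finset.sum_le_card_nsmul _ _ _ fun i _ => hf i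

lemma Real.infDist_Icc_zero_le {x r ε : ℝ} (hx : 0 ≤ x) (hr : 0 ≤ r) (hε : 0 ≤ ε)
    (h : x ≤ r + ε) :
    Metric.infDist x (Set.Icc 0 r) ≤ ε := by
  refine (Metric.infDist_le_dist_of_mem (y := min x r)
    (Set.mem_Icc.2 ⟨le_min hx hr, min_le_right _ _⟩)).trans ?_
  rw [Real.dist_eq, abs_le]
  constructor <;> cases min_cases x r <;> linarith

lemma CountablyDegree1Saturated.exists_forall_norm_le {M : Type*} [CStarAlgebra M]
    (hsat : CountablyDegree1Saturated M) {P : ℕ → (ℕ → M) → M} (hP : ∀ n, IsDeg1StarPoly (P n))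
    {r : ℕ → ℝ} (hr : ∀ n, 0 ≤ r n)
    (happrox : ∀ N : ℕ, ∀ ε > 0, ∃ b : ℕ → M, (∀ m, ‖b m‖ ≤ 1) ∧ ∀ n < N, ‖P n b‖ ≤ r n + ε) :
    ∃ b : ℕ → M, (∀ m, ‖b m‖ ≤ 1) ∧ ∀ n, ‖P n b‖ ≤ r n := by
  refine (hsat P hP (fun n => Set.Icc 0 (r n)) (fun _ => isCompact_Icc) fun N hN => ?_).imp
    fun b hb => ⟨hb.1, fun n => (hb.2 n).2⟩
  have hN' : (0 : ℝ) < 1 / N := one_div_pos.2 (by exact_mod_cast hN)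
  obtain ⟨b, hb, hbP⟩ := happrox (N + 1) (1 / N) hN'
  exact ⟨b, hb, fun n hn =>
    Real.infDist_Icc_zero_le (norm_nonneg _) (hr n) hN'.le (hbP n (Nat.lt_succ_of_le hn))⟩

section GramAverage

variable {M : Type*} [CStarAlgebra M] {Γ : Type*} [Group Γ] (π : Γ →* Mˣ)

/-- Indexed by `t⁻¹` so that conjugation by `π s` translates the index set by `s⁻¹` on the
left, as in the Følner condition. -/
noncomputable def gramAverage (A : Finset Γ) : M :=
  (#A : ℝ)⁻¹ • ∑ t ∈ A, star (π t⁻¹ : M) * π t⁻¹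

lemma isSelfAdjoint_gramAverage (A : Finset Γ) : IsSelfAdjoint (gramAverage π A) :=
  .smul (.all _) (isSelfAdjoint_sum A fun _ _ => .star_mul_self _)

lemma norm_gramAverage_sub_le {A : Finset Γ} (hA : A.Nonempty) {x : M} {R : ℝ}
    (h : ∀ t, ‖star (π t : M) * π t - x‖ ≤ R) : ‖gramAverage π A - x‖ ≤ R := by
  have := (convex_closedBall x R).sum_mem (t := A) (w := fun _ => (#A : ℝ)⁻¹)
    (z := fun t => star (π t⁻¹ : M) * π t⁻¹) (fun _ _ => by positivity)
    (by simp [hA.card_pos.ne']) fun t _ => mem_closedBall_iff_norm.2 (h t⁻¹)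
  rwa [← Finset.smul_sum, mem_closedBall_iff_norm] at this

variable [DecidableEq Γ]

lemma star_mul_gramAverage_mul (A : Finset Γ) (s : Γ) :
    star (π s : M) * gramAverage π A * π s =
      (#A : ℝ)⁻¹ • ∑ t ∈ A.image (s⁻¹ * ·), star (π t⁻¹ : M) * π t⁻¹ := by
  rw [gramAverage, Finset.sum_image fun _ _ _ _ => mul_left_cancel, mul_smul_comm,
    smul_mul_assoc, Finset.mul_sum, Finset.sum_mul]
  congr 1
  refine Finset.sum_congr rfl fun t _ => ?_
  simp only [mul_inv_rev, inv_inv, map_mul, Units.val_mul, star_mul, mul_assoc]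

lemma norm_star_mul_gramAverage_mul_sub_le {C : ℝ} (hC : ∀ s, ‖(π s : M)‖ ≤ C)
    (A : Finset Γ) (s : Γ) :
    ‖star (π s : M) * gramAverage π A * π s - gramAverage π A‖ ≤
      C ^ 2 * (#(A ∆ A.image (s⁻¹ * ·)) / #A) := by
  have hterm : ∀ t, ‖star (π t⁻¹ : M) * π t⁻¹‖ ≤ C ^ 2 := fun t => by
    rw [CStarRing.norm_star_mul_self, ← sq]
    exact pow_le_pow_left₀ (norm_nonneg _) (hC _) 2
  rw [star_mul_gramAverage_mul, gramAverage, ← smul_sub, norm_smul, norm_inv, Real.norm_natCast,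
    symmDiff_comm]
  calc (#A : ℝ)⁻¹ * ‖∑ t ∈ A.image (s⁻¹ * ·), star (π t⁻¹ : M) * π t⁻¹ -
        ∑ t ∈ A, star (π t⁻¹ : M) * π t⁻¹‖
      ≤ (#A : ℝ)⁻¹ * (#(A.image (s⁻¹ * ·) ∆ A) * C ^ 2) := by
        gcongr
        exact norm_sum_sub_sum_le_card_symmDiff_mul _ _ hterm
    _ = C ^ 2 * (#(A.image (s⁻¹ * ·) ∆ A) / #A) := by ring

lemma exists_gramAverage_almost_invariant {F : ℕ → Finset Γ} (hFne : ∀ n, (F n).Nonempty)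
    (hFolner : ∀ s : Γ,
      Tendsto (fun n => ((#(F n ∆ (F n).image (s * ·)) : ℝ) / #(F n))) atTop (nhds 0))
    {C : ℝ} (hC : ∀ s, ‖(π s : M)‖ ≤ C) (S : Finset Γ) {ε : ℝ} (hε : 0 < ε) :
    ∃ A : Finset Γ, A.Nonempty ∧
      ∀ s ∈ S, ‖star (π s : M) * gramAverage π A * π s - gramAverage π A‖ ≤ ε := by
  have hev : ∀ᶠ n in atTop, ∀ s ∈ S, C ^ 2 * (#(F n ∆ (F n).image (s⁻¹ * ·)) / #(F n)) ≤ ε := by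
    refine (eventually_all_finset S).2 fun s _ => ?_
    have := (hFolner s⁻¹).const_mul (C ^ 2)
    rw [mul_zero] at this
    exact this.eventually (eventually_le_nhds hε)
  obtain ⟨n, hn⟩ := hev.exists
  exact ⟨F n, hFne n, fun s hs => (norm_star_mul_gramAverage_mul_sub_le π hC _ s).trans (hn s hs)⟩

end GramAverage

section InvarianceConditions

variable {M : Type*} [CStarAlgebra M] {Γ : Type*} [Group Γ] (π : Γ →* Mˣ)

/-- Read as `‖invarianceConditions π e κ n x‖ ≤ invarianceBounds κ n`, these say that `x 0` is
self-adjoint, that `κ • x 0` has spectrum in `[κ⁻¹, κ]` (a ball around the midpoint), and that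
`x 0` is fixed by `y ↦ π(e k)* y π(e k)`. -/
noncomputable def invarianceConditions (e : ℕ → Γ) (κ : ℝ) : ℕ → (ℕ → M) → M
  | 0 => fun x => x 0 - star (x 0)
  | 1 => fun x => κ • x 0 - algebraMap ℝ M ((κ⁻¹ + κ) / 2)
  | k + 2 => fun x => star (π (e k) : M) * x 0 * π (e k) - x 0

noncomputable def invarianceBounds (κ : ℝ) : ℕ → ℝ :=
  Pi.single 1 ((κ - κ⁻¹) / 2)

lemma isDeg1StarPoly_invarianceConditions (e : ℕ → Γ) (κ : ℝ) (n : ℕ) :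
    IsDeg1StarPoly (invarianceConditions π e κ n) := by
  rcases n with _ | _ | k
  · refine ⟨0, 1, fun _ => 1, fun _ => 1, fun _ => -1, fun _ => 1, fun _ => 0, fun _ => 0,
      fun x => ?_⟩
    simp [invarianceConditions, sub_eq_add_neg]
  · refine ⟨-algebraMap ℝ M ((κ⁻¹ + κ) / 2), 1, fun _ => algebraMap ℝ M κ, fun _ => 1,
      fun _ => 0, fun _ => 0, fun _ => 0, fun _ => 0, fun x => ?_⟩
    simp [invarianceConditions, Algebra.smul_def, sub_eq_add_neg, add_comm]
  · refine ⟨0, 2, ![star (π (e k) : M), -1], ![(π (e k) : M), 1],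
      fun _ => 0, fun _ => 0, fun _ => 0, fun _ => 0, fun x => ?_⟩
    simp [invarianceConditions, Fin.sum_univ_two, sub_eq_add_neg]

variable [DecidableEq Γ]

lemma exists_approx_invarianceConditions [Nontrivial M] {F : ℕ → Finset Γ}
    (hFne : ∀ n, (F n).Nonempty)
    (hFolner : ∀ s : Γ,
      Tendsto (fun n => ((#(F n ∆ (F n).image (s * ·)) : ℝ) / #(F n))) atTop (nhds 0))
    {C : ℝ} (hC : ∀ s, ‖(π s : M)‖ ≤ C) (e : ℕ → Γ) (N : ℕ) {ε : ℝ} (hε : 0 < ε) :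
    ∃ b : ℕ → M, (∀ m, ‖b m‖ ≤ 1) ∧
      ∀ n < N, ‖invarianceConditions π e (C ^ 2) n b‖ ≤ invarianceBounds (C ^ 2) n + ε := by
  have hC1 : 1 ≤ C ^ 2 := one_le_pow₀ (by simpa using hC 1)
  have hball : ∀ t, ‖star (π t : M) * π t - algebraMap ℝ M (((C ^ 2)⁻¹ + C ^ 2) / 2)‖ ≤
      (C ^ 2 - (C ^ 2)⁻¹) / 2 := fun t =>
    (π t).norm_star_mul_self_sub_algebraMap_le (hC t) (by simpa using hC t⁻¹)
  have hnorm : ∀ t, ‖star (π t : M) * π t - 0‖ ≤ C ^ 2 := fun t => by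
    rw [sub_zero, CStarRing.norm_star_mul_self, ← sq]
    exact pow_le_pow_left₀ (norm_nonneg _) (hC t) 2
  obtain ⟨A, hA, hAinv⟩ := exists_gramAverage_almost_invariant π hFne hFolner hC
    ((Finset.range N).image e) hε
  set g := gramAverage π A
  refine ⟨fun _ => (C ^ 2)⁻¹ • g, fun _ => ?_, fun n hn => ?_⟩
  · rw [norm_smul, norm_inv, norm_pow, Real.norm_eq_abs, sq_abs]
    exact inv_mul_le_one_of_le₀ (by simpa using norm_gramAverage_sub_le π hA hnorm) (by positivity)
  rcases n with _ | _ | k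
  · have hbound : invarianceBounds (C ^ 2) 0 = 0 := Pi.single_eq_of_ne zero_ne_one _
    have hg : star g = g := (isSelfAdjoint_gramAverage π A).star_eq
    simp [invarianceConditions, hbound, hg, hε.le]
  · simp only [invarianceConditions, invarianceBounds, Pi.single_eq_same,
      smul_inv_smul₀ (by positivity : C ^ 2 ≠ 0)]
    linarith [norm_gramAverage_sub_le π hA hball]
  · have hbound : invarianceBounds (C ^ 2) (k + 2) = 0 := Pi.single_eq_of_ne (by omega) _
    have hk : e k ∈ (Finset.range N).image e := Finset.mem_image_of_mem e (by simp; omega)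
    simp only [invarianceConditions, hbound, zero_add, mul_smul_comm, smul_mul_assoc, ← smul_sub,
      norm_smul, norm_inv, norm_pow, Real.norm_eq_abs, sq_abs]
    exact inv_mul_le_of_le_mul₀ (by positivity) (by positivity)
      ((hAinv _ hk).trans (le_mul_of_one_le_left hε.le hC1))

end InvarianceConditions

theorem CountablyDegree1Saturated.exists_invariant_isSelfAdjoint {M : Type*} [CStarAlgebra M]
    [Nontrivial M] (hsat : CountablyDegree1Saturated M) {Γ : Type*} [Group Γ] [Countable Γ]
    [DecidableEq Γ] {F : ℕ → Finset Γ} (hFne : ∀ n, (F n).Nonempty)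
    (hFolner : ∀ s : Γ,
      Tendsto (fun n => ((#(F n ∆ (F n).image (s * ·)) : ℝ) / #(F n))) atTop (nhds 0))
    (π : Γ →* Mˣ) {C : ℝ} (hC : ∀ s, ‖(π s : M)‖ ≤ C) :
    ∃ h : M, IsSelfAdjoint h ∧ spectrum ℝ h ⊆ Set.Icc (C ^ 2)⁻¹ (C ^ 2) ∧
      ∀ s, star (π s : M) * h * π s = h := by
  have hC1 : 1 ≤ C ^ 2 := one_le_pow₀ (by simpa using hC 1)
  obtain ⟨e, he⟩ := exists_surjective_nat Γ
  have hradius : (0 : ℝ) ≤ (C ^ 2 - (C ^ 2)⁻¹) / 2 := by linarith [inv_le_one_of_one_le₀ hC1]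
  have hbounds : 0 ≤ invarianceBounds (C ^ 2) := Pi.single_nonneg.2 hradius
  obtain ⟨b, -, hb⟩ := hsat.exists_forall_norm_le
    (isDeg1StarPoly_invarianceConditions π e (C ^ 2)) hbounds
    fun N ε hε => exists_approx_invarianceConditions π hFne hFolner hC e N hε
  have hexact : ∀ n ≠ 1, invarianceConditions π e (C ^ 2) n b = 0 := fun n hn =>
    norm_le_zero_iff.1 ((hb n).trans_eq (Pi.single_eq_of_ne hn _))
  refine ⟨C ^ 2 • b 0, .smul (.all _) (sub_eq_zero.1 (hexact 0 zero_ne_one)).symm, ?_, fun s => ?_⟩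
  · have hball : ‖C ^ 2 • b 0 - algebraMap ℝ M (((C ^ 2)⁻¹ + C ^ 2) / 2)‖ ≤
        (C ^ 2 - (C ^ 2)⁻¹) / 2 := (hb 1).trans_eq (Pi.single_eq_same 1 _)
    convert spectrum_subset_Icc_of_norm_sub_algebraMap_le hball using 2 <;> ring
  · obtain ⟨k, rfl⟩ := he s
    rw [mul_smul_comm, smul_mul_assoc, sub_eq_zero.1 (hexact (k + 2) (by omega))]

/-- Every uniformly bounded representation of a countable amenable group in a unital
countably degree-1 saturated C*-algebra is unitarizable, with a similarity element `v`
satisfying `‖v‖·‖v⁻¹‖ ≤ ‖π‖²`. Amenability is expressed by a Følner sequence. -/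
theorem uniformly_bounded_rep_unitarizable
    {M : Type*} [CStarAlgebra M] (hsat : CountablyDegree1Saturated M)
    {Γ : Type*} [Group Γ] [Countable Γ] [DecidableEq Γ]
    (F : ℕ → Finset Γ) (hFne : ∀ n, (F n).Nonempty)
    (hFolner : ∀ s : Γ,
      Tendsto (fun n => (((symmDiff (F n) ((F n).image (s * ·))).card : ℝ) / (F n).card))
        atTop (nhds 0))
    (π : Γ →* Mˣ) (C : ℝ) (hC : ∀ s : Γ, ‖((π s : Mˣ) : M)‖ ≤ C) :
    ∃ v : Mˣ, ‖(v : M)‖ * ‖((v⁻¹ : Mˣ) : M)‖ ≤ C ^ 2 ∧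
      ∀ s : Γ, (v : M) * ((π s : Mˣ) : M) * ((v⁻¹ : Mˣ) : M) ∈ unitary M := by
  rcases subsingleton_or_nontrivial M with hM | hM
  · refine ⟨1, ?_, fun _ => by convert (unitary M).one_mem⟩
    rw [Subsingleton.elim ((1 : Mˣ) : M) 0, norm_zero, zero_mul]
    positivity
  obtain ⟨h, hsa, hspec, hinv⟩ := hsat.exists_invariant_isSelfAdjoint hFne hFolner π hC
  have hC₀ : 0 < C := one_pos.trans_le (by simpa using hC 1)
  obtain ⟨v, rfl, hv, hv_inv⟩ := hsa.exists_unit_star_mul_self_eq (by positivity) hspec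
  refine ⟨v, ?_, fun s => v.conj_mem_unitary (π s) (hinv s)⟩
  calc ‖(v : M)‖ * ‖(↑v⁻¹ : M)‖ ≤ √(C ^ 2) * (√(C ^ 2)⁻¹)⁻¹ :=
        mul_le_mul hv hv_inv (norm_nonneg _) (Real.sqrt_nonneg _)
    _ = C ^ 2 := by rw [Real.sqrt_inv, inv_inv, Real.mul_self_sqrt (sq_nonneg C)]
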